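/- Let Ω be a domain in ℂ, M > 0, and let 𝓕 be a family of holomorphic functions f : Ω → ℂ with ∫_Ω log⁺|f| dm ≤ M for all f ∈ 𝓕. Then 𝓕 is locally uniformly bounded on Ω. -/

import Mathlib

/-!
For holomorphic `f`, Jensen's formula shows that `log ‖f c‖` is at most the average of
`log ‖f‖`, hence of `log⁺ ‖f‖`, over every circle about `c`. Integrating over the radii in
polar coordinates gives `π r² log ‖f z‖ ≤ ∫_{B(z, r)} log⁺ ‖f‖ ≤ M` whenever the closed disc
`B̄(z, r)` lies in `Ω`, so `‖f‖ ≤ exp (M / (π r²))` on `K` as soon as the closed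
`r`-thickening of `K` lies in `Ω`.
-/

open MeasureTheory Metric Set Real

theorem log_norm_le_circleAverage_log_norm {f : ℂ → ℂ} {c : ℂ} {R : ℝ}
    (hf : AnalyticOnNhd ℂ f (closedBall c |R|)) (hc : f c ≠ 0) :
    log ‖f c‖ ≤ circleAverage (log ‖f ·‖) c R := by
  rcases eq_or_ne R 0 with rfl | hR
  · simp
  -- In Jensen's formula each zero `u` contributes `ord_u f * log (|R| / ‖c - u‖) ≥ 0`.
  rw [hf.circleAverage_log_norm hR hc, le_add_iff_nonneg_left]
  refine finsum_nonneg fun u => ?_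
  by_cases hu : u ∈ closedBall c |R|
  · refine mul_nonneg (mod_cast MeromorphicOn.AnalyticOnNhd.divisor_nonneg hf u) ?_
    rw [← log_abs]
    rcases eq_or_ne u c with rfl | huc
    · simp
    apply log_nonneg
    have : 0 < ‖c - u‖ := norm_pos_iff.mpr (sub_ne_zero.mpr huc.symm)
    rw [abs_mul, abs_inv, abs_norm, ← div_eq_mul_inv, one_le_div this]
    simpa [dist_eq_norm'] using hu
  · simp [hu]

theorem log_norm_le_circleAverage_posLog_norm {f : ℂ → ℂ} {c : ℂ} {R : ℝ}
    (hf : AnalyticOnNhd ℂ f (closedBall c |R|)) (hc : f c ≠ 0) :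
    log ‖f c‖ ≤ circleAverage (log⁺ ‖f ·‖) c R := by
  have hmero : MeromorphicOn f (sphere c |R|) := (hf.mono sphere_subset_closedBall).meromorphicOn
  exact (log_norm_le_circleAverage_log_norm hf hc).trans <| circleAverage_mono
    hmero.circleIntegrable_log_norm hmero.circleIntegrable_posLog_norm fun _ _ => le_max_right _ _

theorem add_polarCoord_symm_eq_circleMap (c : ℂ) (p : ℝ × ℝ) :
    c + Complex.polarCoord.symm p = circleMap c p.1 p.2 := by
  simp [Complex.polarCoord_symm_apply, circleMap, Complex.exp_mul_I, ← Complex.ofReal_cos,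
    ← Complex.ofReal_sin]

theorem setIntegral_ball_eq_setIntegral_polar {E : Type*} [NormedAddCommGroup E]
    [NormedSpace ℝ E] (g : ℂ → E) (c : ℂ) (R : ℝ) :
    ∫ w in ball c R, g w = ∫ p in Ioo 0 R ×ˢ Ioo (-π) π, p.1 • g (circleMap c p.1 p.2) := by
  set F : ℝ × ℝ → E := fun p => p.1 • g (circleMap c p.1 p.2)
  have hmem : ∀ p ∈ polarCoord.target, c + Complex.polarCoord.symm p ∈ ball c R ↔ p.1 < R := by
    intro p hp
    rw [mem_ball, dist_eq_norm, add_sub_cancel_left, Complex.norm_polarCoord_symm,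
      abs_of_pos hp.1]
  have htarget : polarCoord.target ∩ {p : ℝ × ℝ | p.1 < R} = Ioo 0 R ×ˢ Ioo (-π) π := by
    ext p
    simp only [polarCoord_target, mem_inter_iff, mem_prod, mem_Ioi, mem_Ioo, mem_ofPred_eq]
    tauto
  calc ∫ w in ball c R, g w = ∫ w, (ball c R).indicator g (c + w) := by
        rw [← integral_indicator measurableSet_ball,
          integral_add_left_eq_self ((ball c R).indicator g) c]
    _ = ∫ p in polarCoord.target, {p : ℝ × ℝ | p.1 < R}.indicator F p := by
        rw [← Complex.integral_comp_polarCoord_symm]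
        refine setIntegral_congr_fun polarCoord.open_target.measurableSet fun p hp => ?_
        by_cases hpR : p.1 < R
        · rw [indicator_of_mem (show p ∈ {p : ℝ × ℝ | p.1 < R} from hpR),
            indicator_of_mem ((hmem p hp).mpr hpR), add_polarCoord_symm_eq_circleMap]
        · rw [indicator_of_notMem (show p ∉ {p : ℝ × ℝ | p.1 < R} from hpR),
            indicator_of_notMem (mt (hmem p hp).mp hpR), smul_zero]
    _ = ∫ p in Ioo 0 R ×ˢ Ioo (-π) π, F p := by
        rw [setIntegral_indicator (measurableSet_lt measurable_fst measurable_const), htarget]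

theorem setIntegral_Ioo_circleMap_eq_circleAverage {E : Type*} [NormedAddCommGroup E]
    [NormedSpace ℝ E] (g : ℂ → E) (c : ℂ) (R : ℝ) :
    ∫ θ in Ioo (-π) π, g (circleMap c R θ) = (2 * π) • circleAverage g c R := by
  rw [circleAverage_eq_integral_add (-π), smul_inv_smul₀ (by positivity),
    intervalIntegral.integral_comp_add_right (fun θ => g (circleMap c R θ)), zero_add,
    show 2 * π + -π = π by ring, intervalIntegral.integral_of_le (neg_le_self pi_pos.le),
    integral_Ioc_eq_integral_Ioo]

theorem setIntegral_ball_eq_intervalIntegral_circleAverage {E : Type*} [NormedAddCommGroup E]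
    [NormedSpace ℝ E] {g : ℂ → E} {c : ℂ} {R : ℝ} (hR : 0 ≤ R)
    (hg : ContinuousOn g (closedBall c R)) :
    ∫ w in ball c R, g w = ∫ s in 0..R, (2 * π * s) • circleAverage g c s := by
  have hF : Integrable (fun p : ℝ × ℝ => p.1 • g (circleMap c p.1 p.2))
      ((volume.restrict (Ioo 0 R)).prod (volume.restrict (Ioo (-π) π))) := by
    rw [Measure.prod_restrict, ← Measure.volume_eq_prod]
    refine ContinuousOn.integrableOn_compact (isCompact_Icc.prod isCompact_Icc) ?_ |>.mono_set
      (prod_mono Ioo_subset_Icc_self Ioo_subset_Icc_self)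
    exact continuousOn_fst.smul (hg.comp (by fun_prop) fun p hp =>
      closedBall_subset_closedBall hp.1.2 (circleMap_mem_closedBall c hp.1.1 p.2))
  rw [setIntegral_ball_eq_setIntegral_polar, Measure.volume_eq_prod, ← Measure.prod_restrict,
    integral_prod _ hF, intervalIntegral.integral_of_le hR, integral_Ioc_eq_integral_Ioo]
  simp_rw [integral_smul, setIntegral_Ioo_circleMap_eq_circleAverage, smul_smul, mul_comm _ (2 * π)]

theorem mul_log_norm_le_setIntegral_posLog_norm {f : ℂ → ℂ} {c : ℂ} {R : ℝ} (hR : 0 ≤ R)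
    (hf : AnalyticOnNhd ℂ f (closedBall c R)) (hc : f c ≠ 0) :
    π * R ^ 2 * log ‖f c‖ ≤ ∫ w in ball c R, log⁺ ‖f w‖ := by
  have hcont : ContinuousOn (fun w => log⁺ ‖f w‖) (closedBall c R) :=
    continuous_posLog.comp_continuousOn hf.continuousOn.norm
  have hcircle : ContinuousOn (circleAverage (fun w => log⁺ ‖f w‖) c) (Icc 0 R) :=
    (hcont.mono fun w hw => mem_closedBall_iff_norm.mpr hw.2).circleAverage fun _ hs => hs.1
  rw [setIntegral_ball_eq_intervalIntegral_circleAverage hR hcont]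
  calc π * R ^ 2 * log ‖f c‖ = ∫ s in 0..R, (2 * π * s) • log ‖f c‖ := by
        rw [intervalIntegral.integral_smul_const, intervalIntegral.integral_const_mul, integral_id,
          smul_eq_mul]
        ring
    _ ≤ ∫ s in 0..R, (2 * π * s) • circleAverage (log⁺ ‖f ·‖) c s := by
        refine intervalIntegral.integral_mono_on hR ?_ ?_ fun s hs => ?_
        · exact Continuous.intervalIntegrable (by fun_prop) _ _
        · exact ((continuousOn_const.mul continuousOn_id).smul hcircle).intervalIntegrable_of_Icc hR
        · have hsR : closedBall c |s| ⊆ closedBall c R :=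
            closedBall_subset_closedBall ((abs_of_nonneg hs.1).trans_le hs.2)
          exact smul_le_smul_of_nonneg_left
            (log_norm_le_circleAverage_posLog_norm (hf.mono hsR) hc) (mul_nonneg two_pi_pos.le hs.1)

theorem stmt3_general (Ω : Set ℂ) (hΩ : IsOpen Ω) (M : ℝ)
    (𝓕 : Set (ℂ → ℂ)) (hhol : ∀ f ∈ 𝓕, DifferentiableOn ℂ f Ω)
    (hbound : ∀ f ∈ 𝓕, (IntegrableOn (fun z => max (Real.log ‖f z‖) 0) Ω volume ∧
      ∫ z in Ω, max (Real.log ‖f z‖) 0 ∂volume ≤ M)) :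
    ∀ K : Set ℂ, IsCompact K → K ⊆ Ω →
      ∃ C > 0, ∀ f ∈ 𝓕, ∀ z ∈ K, ‖f z‖ ≤ C := by
  intro K hK hKΩ
  obtain ⟨r, hr, hrΩ⟩ := hK.exists_cthickening_subset_open hΩ hKΩ
  refine ⟨exp (M / (π * r ^ 2)), exp_pos _, fun f hf z hz => ?_⟩
  rcases eq_or_ne (f z) 0 with hfz | hfz
  · rw [hfz, norm_zero]
    exact (exp_pos _).le
  have hball : closedBall z r ⊆ Ω := (closedBall_subset_cthickening hz r).trans hrΩ
  have hmean := mul_log_norm_le_setIntegral_posLog_norm hr.le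
    (((hhol f hf).analyticOnNhd hΩ).mono hball) hfz
  have hsub : ∫ w in ball z r, log⁺ ‖f w‖ ≤ ∫ w in Ω, max (log ‖f w‖) 0 := by
    simp_rw [posLog_apply, max_comm (0 : ℝ)]
    exact setIntegral_mono_set (hbound f hf).1 (.of_forall fun _ => le_max_right _ _)
      (ball_subset_closedBall.trans hball).eventuallyLE
  rw [← log_le_iff_le_exp (norm_pos_iff.mpr hfz), le_div_iff₀ (by positivity)]
  linarith [(hbound f hf).2]

theorem stmt3 (Ω : Set ℂ) (hΩ : IsOpen Ω) (hconn : IsConnected Ω)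
    (hproper : Ωᶜ.Nonempty) (M : ℝ) (hM : 0 < M)
    (𝓕 : Set (ℂ → ℂ)) (hhol : ∀ f ∈ 𝓕, DifferentiableOn ℂ f Ω)
    (hbound : ∀ f ∈ 𝓕, (IntegrableOn (fun z => max (Real.log ‖f z‖) 0) Ω volume ∧
      ∫ z in Ω, max (Real.log ‖f z‖) 0 ∂volume ≤ M)) :
    ∀ K : Set ℂ, IsCompact K → K ⊆ Ω →
      ∃ C > 0, ∀ f ∈ 𝓕, ∀ z ∈ K, ‖f z‖ ≤ C :=
  stmt3_general Ω hΩ M 𝓕 hhol hbound
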